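/- Let q be a prime power and let n_1 and n_2 be odd positive integers coprime to q. If all monic irreducible factors of x^{n_1} − 1 over F_{q^2} are SCRIM and all monic irreducible factors of x^{n_2} − 1 over F_{q^2} are SCRIM, then all monic irreducible factors of x^{n_1 n_2} − 1 over F_{q^2} are SCRIM. -/

import Mathlib

open Polynomial

/-- The reciprocal polynomial `f*(x) = x^(deg f) * f(0)⁻¹ * f(1/x)`. -/
noncomputable def crecip {F : Type*} [Field F] (f : F[X]) : F[X] :=
  C (f.coeff 0)⁻¹ * f.reverse

/-- The conjugate-reciprocal polynomial `f†`, obtained by applying the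
conjugation `a ↦ a ^ q` to each coefficient of `f*`. -/
noncomputable def cdagger {F : Type*} [Field F] (q : ℕ) (f : F[X]) : F[X] :=
  (crecip f).sum fun i a => C (a ^ q) * X ^ i

/-- A polynomial is SCRIM if it is monic, irreducible, and self-conjugate-reciprocal. -/
def IsSCRIM {F : Type*} [Field F] (q : ℕ) (f : F[X]) : Prop :=
  f.Monic ∧ Irreducible f ∧ f = cdagger q f

/-- The set `Ω_{q²,n}` of SCRIM factors of `x^n - 1` over `F = F_{q²}`. -/
def scrimFactors (F : Type*) [Field F] (q n : ℕ) : Set F[X] :=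
  {f | IsSCRIM q f ∧ f ∣ X ^ n - 1}

/-!
Write `q` for the conjugation exponent. If `f` is irreducible and `α ≠ 0` is a root of `f`, then
`(α ^ q)⁻¹` is a root of `f†`, while the roots of `f` are the Frobenius conjugates
`α ^ q ^ (2 * i)`. For `α` a primitive `n`-th root of unity this makes `f = f†` equivalent to
`n ∣ q ^ j + 1` for some odd `j`, so for `n` coprime to `q` all monic irreducible factors of
`X ^ n - 1` are SCRIM exactly when such a `j` exists. That condition passes from `n₁` and `n₂`
to `n₁ * n₂`: with `x = q ^ (j₁ * j₂)` both `n₁` and `n₂` divide `x + 1`, and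
`n₁ * n₂ ∣ (x + 1) * n₂ ∣ x ^ n₂ + 1`.
-/

namespace Nat

theorem mul_dvd_pow_add_one_of_dvd {n x : ℕ} (hn : Odd n) (h : n ∣ x + 1) :
    (x + 1) * n ∣ x ^ n + 1 := by
  -- `x ^ n + 1 = (x + 1) * ∑ x ^ i * (-1) ^ (n - 1 - i)`, and the sum is `≡ n` modulo `x + 1`.
  have hsum : (n : ℤ) ∣ ∑ i ∈ Finset.range n, (x : ℤ) ^ i * (-1) ^ (n - 1 - i) :=
    dvd_geom_sum₂_self (by rw [sub_neg_eq_add]; exact_mod_cast h)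
  have hfactor := geom_sum₂_mul (x : ℤ) (-1) n
  rw [sub_neg_eq_add, hn.neg_one_pow, sub_neg_eq_add] at hfactor
  rw [← Int.natCast_dvd_natCast]
  push_cast
  rw [← hfactor, mul_comm]
  exact mul_dvd_mul_right hsum _

theorem mul_dvd_pow_add_one {q n₁ n₂ j₁ j₂ : ℕ} (hj₁ : Odd j₁) (hj₂ : Odd j₂) (hn₂ : Odd n₂)
    (h₁ : n₁ ∣ q ^ j₁ + 1) (h₂ : n₂ ∣ q ^ j₂ + 1) :
    n₁ * n₂ ∣ q ^ (j₁ * j₂ * n₂) + 1 := by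
  have hx₁ : n₁ ∣ q ^ (j₁ * j₂) + 1 := by
    rw [pow_mul]
    simpa using h₁.trans (hj₂.nat_add_dvd_pow_add_pow (q ^ j₁) 1)
  have hx₂ : n₂ ∣ q ^ (j₁ * j₂) + 1 := by
    rw [mul_comm, pow_mul]
    simpa using h₂.trans (hj₁.nat_add_dvd_pow_add_pow (q ^ j₂) 1)
  rw [pow_mul]
  exact (mul_dvd_mul_right hx₁ n₂).trans (mul_dvd_pow_add_one_of_dvd hn₂ hx₂)

theorem exists_odd_dvd_pow_add_one_of_dvd_pow_add {q n i : ℕ} (hnq : n.Coprime q)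
    (h : n ∣ q ^ (2 * i) + q) : ∃ j, Odd j ∧ n ∣ q ^ j + 1 := by
  have hn : n ≠ 0 := by
    rintro rfl
    rw [coprime_zero_left] at hnq
    simp [hnq] at h
  set t := n.totient
  have ht : 0 < t := totient_pos.mpr (pos_of_ne_zero hn)
  -- Multiplying by `q ^ (2 * t) ≡ 1` makes the exponent positive, so that `q` can be cancelled.
  refine ⟨2 * (i + t - 1) + 1, odd_two_mul_add_one _, hnq.dvd_of_dvd_mul_left ?_⟩
  have hj : 2 * (i + t - 1) + 1 + 1 = 2 * i + t * 2 := by omega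
  rw [mul_add, mul_one, ← _root_.pow_succ', hj, pow_add, pow_mul q t]
  have hmod := (((ModEq.pow_totient hnq.symm).pow 2).mul_left (q ^ (2 * i))).add_right q
  rw [one_pow, mul_one] at hmod
  exact modEq_zero_iff_dvd.mp (hmod.trans (modEq_zero_iff_dvd.mpr h))

end Nat

namespace FiniteField

variable {F : Type*} [Field F] [Fintype F]

theorem natCast_ne_zero_of_coprime_card {n : ℕ} (h : n.Coprime (Fintype.card F)) :
    (n : F) ≠ 0 := by
  obtain ⟨r, _, k, hr, hcard⟩ := card' F
  intro h0
  exact hr.one_lt.ne' (Nat.eq_one_of_dvd_coprimes h ((CharP.cast_eq_zero_iff F r n).mp h0)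
    (hcard ▸ dvd_pow_self r k.ne_zero))

theorem aeval_pow_card_pow_eq_zero {K : Type*} [CommRing K] [Algebra F K] {f : F[X]} {x : K}
    (hx : aeval x f = 0) (i : ℕ) : aeval (x ^ Fintype.card F ^ i) f = 0 := by
  have h := aeval_algHom_apply (frobeniusAlgHom F K ^ i) x f
  rwa [hx, map_zero, AlgHom.coe_pow, coe_frobeniusAlgHom, pow_iterate] at h

theorem exists_eq_pow_card_pow_of_aeval_minpoly {K : Type*} [Field K] [Algebra F K] [Finite K]
    {x y : K} (h : aeval y (minpoly F x) = 0) : ∃ i, y = x ^ Fintype.card F ^ i := by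
  have hx := Algebra.IsIntegral.isIntegral (R := F) x
  have hxy : minpoly F y = minpoly F x :=
    (minpoly.eq_of_irreducible_of_monic (minpoly.irreducible hx) h (minpoly.monic hx)).symm
  obtain ⟨g, rfl⟩ := (Normal.minpoly_eq_iff_mem_orbit K).mp hxy
  obtain ⟨i, rfl⟩ := (bijective_frobeniusAlgEquivOfAlgebraic_pow F K).2 g
  exact ⟨i, by simp [AlgEquiv.smul_def, coe_frobeniusAlgEquivOfAlgebraic_iterate]⟩

end FiniteField

section ConjugateReciprocal

variable {F : Type*} [Field F]

theorem coeff_zero_ne_zero_of_dvd_X_pow_sub_one {f : F[X]} {n : ℕ} (hn : n ≠ 0)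
    (hf : f ∣ X ^ n - 1) : f.coeff 0 ≠ 0 := by
  rw [coeff_zero_eq_eval_zero]
  intro h
  simpa [h, zero_pow hn] using eval_dvd (x := (0 : F)) hf

theorem monic_crecip {f : F[X]} (h0 : f.coeff 0 ≠ 0) : (crecip f).Monic := by
  have htc : f.trailingCoeff = f.coeff 0 := by
    rw [trailingCoeff, natTrailingDegree_eq_zero.mpr (Or.inr h0)]
  rw [Monic, crecip, leadingCoeff_mul, leadingCoeff_C, reverse_leadingCoeff, htc,
    inv_mul_cancel₀ h0]

theorem natDegree_crecip {f : F[X]} (h0 : f.coeff 0 ≠ 0) :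
    (crecip f).natDegree = f.natDegree := by
  rw [crecip, natDegree_C_mul (inv_ne_zero h0), reverse_natDegree,
    natTrailingDegree_eq_zero.mpr (Or.inr h0), Nat.sub_zero]

variable {p s : ℕ} [ExpChar F p]

theorem cdagger_eq_map (f : F[X]) :
    cdagger (p ^ s) f = (crecip f).map (iterateFrobenius F p s) := by
  rw [map, eval₂_eq_sum, cdagger]
  simp [iterateFrobenius_def]

theorem monic_cdagger {f : F[X]} (h0 : f.coeff 0 ≠ 0) : (cdagger (p ^ s) f).Monic := by
  rw [cdagger_eq_map]
  exact (monic_crecip h0).map _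

theorem natDegree_cdagger {f : F[X]} (h0 : f.coeff 0 ≠ 0) :
    (cdagger (p ^ s) f).natDegree = f.natDegree := by
  rw [cdagger_eq_map, natDegree_map, natDegree_crecip h0]

theorem aeval_inv_pow_cdagger_eq_zero {K : Type*} [Field K] [Algebra F K] [ExpChar K p]
    {f : F[X]} {γ : K} (hγ : γ ≠ 0) (hf : aeval γ f = 0) :
    aeval (γ ^ p ^ s)⁻¹ (cdagger (p ^ s) f) = 0 := by
  have hrecip : aeval γ⁻¹ (crecip f) = 0 := by
    let := invertibleOfNonzero hγ
    rw [crecip, map_mul]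
    refine mul_eq_zero_of_right _ ?_
    rw [aeval_def, ← invOf_eq_inv, eval₂_reverse_eq_zero_iff, ← aeval_def, hf]
  rw [cdagger_eq_map, aeval_def, eval₂_map, (algebraMap F K).iterateFrobenius_comm,
    ← inv_pow, ← iterateFrobenius_def (R := K), ← hom_eval₂, ← aeval_def, hrecip, map_zero]

theorem eq_cdagger_of_aeval_cdagger_eq_zero {K : Type*} [Field K] [Algebra F K] {f : F[X]}
    (hm : f.Monic) (hirr : Irreducible f) (h0 : f.coeff 0 ≠ 0) {α : K}
    (hα : aeval α f = 0) (hα' : aeval α (cdagger (p ^ s) f) = 0) : f = cdagger (p ^ s) f := by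
  have hdvd : minpoly F α ∣ cdagger (p ^ s) f := minpoly.dvd F α hα'
  rw [← minpoly.eq_of_irreducible_of_monic hirr hα hm] at hdvd
  exact (eq_of_monic_of_dvd_of_natDegree_le hm (monic_cdagger h0) hdvd
    (natDegree_cdagger h0).le).symm

theorem eq_cdagger_of_dvd_X_pow_sub_one [Fintype F] (hF : Fintype.card F = (p ^ s) ^ 2)
    {n j : ℕ} (hn : n ≠ 0) (hj : Odd j) (hnj : n ∣ (p ^ s) ^ j + 1) {f : F[X]} (hm : f.Monic)
    (hirr : Irreducible f) (hf : f ∣ X ^ n - 1) : f = cdagger (p ^ s) f := by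
  have := Fact.mk hirr
  have := expChar_of_injective_algebraMap (algebraMap F (AdjoinRoot f)).injective p
  set α := AdjoinRoot.root f
  have hα : aeval α f = 0 := by rw [AdjoinRoot.aeval_eq, AdjoinRoot.mk_self]
  have hαn : α ^ n = 1 := by
    simpa [sub_eq_zero] using aeval_eq_zero_of_dvd_aeval_eq_zero hf hα
  have hα0 : α ≠ 0 := by
    rintro h
    simp [h, zero_pow hn] at hαn
  obtain ⟨w, rfl⟩ := hj
  -- `α ^ q ^ (2 * w)` is a root of `f` whose `q`-th power is `α ^ q ^ j = α⁻¹`.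
  have hinv : ((α ^ Fintype.card F ^ w) ^ p ^ s)⁻¹ = α := by
    refine inv_eq_of_mul_eq_one_left ?_
    obtain ⟨c, hc⟩ := hnj
    rw [← pow_mul, hF, ← pow_mul, ← pow_succ, ← pow_succ', hc, pow_mul, hαn, one_pow]
  refine eq_cdagger_of_aeval_cdagger_eq_zero hm hirr
    (coeff_zero_ne_zero_of_dvd_X_pow_sub_one hn hf) hα ?_
  rw [← hinv]
  exact aeval_inv_pow_cdagger_eq_zero (pow_ne_zero _ hα0)
    (FiniteField.aeval_pow_card_pow_eq_zero hα w)

theorem exists_odd_dvd_pow_add_one_of_forall_eq_cdagger [Fintype F]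
    (hF : Fintype.card F = (p ^ s) ^ 2) {n : ℕ} (hnq : n.Coprime (p ^ s))
    (hall : ∀ f : F[X], f.Monic → Irreducible f → f ∣ X ^ n - 1 → f = cdagger (p ^ s) f) :
    ∃ j, Odd j ∧ n ∣ (p ^ s) ^ j + 1 := by
  have : NeZero (n : F) :=
    ⟨FiniteField.natCast_ne_zero_of_coprime_card (hF ▸ hnq.pow_right 2)⟩
  have := NeZero.of_neZero_natCast F (n := n)
  let K := CyclotomicField n F
  have : Finite K := by
    have := IsCyclotomicExtension.finiteDimensional {n} F K
    exact Module.finite_of_finite F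
  have := expChar_of_injective_algebraMap (algebraMap F K).injective p
  set ζ := IsCyclotomicExtension.zeta n F K
  have hζ : IsPrimitiveRoot ζ n := IsCyclotomicExtension.zeta_spec n F K
  have hζ0 : ζ ≠ 0 := hζ.ne_zero (NeZero.ne n)
  have hint := Algebra.IsIntegral.isIntegral (R := F) ζ
  have hdvd : minpoly F ζ ∣ X ^ n - 1 := minpoly.dvd F ζ (by simp [hζ.pow_eq_one])
  have hself := hall _ (minpoly.monic hint) (minpoly.irreducible hint) hdvd
  have hroot : aeval (ζ ^ p ^ s)⁻¹ (minpoly F ζ) = 0 := by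
    rw [hself]
    exact aeval_inv_pow_cdagger_eq_zero hζ0 (minpoly.aeval F ζ)
  obtain ⟨i, hi⟩ := FiniteField.exists_eq_pow_card_pow_of_aeval_minpoly hroot
  have hζi : ζ ^ ((p ^ s) ^ (2 * i) + p ^ s) = 1 := by
    rw [pow_add, pow_mul, ← hF, ← hi]
    exact inv_mul_cancel₀ (pow_ne_zero _ hζ0)
  exact Nat.exists_odd_dvd_pow_add_one_of_dvd_pow_add hnq ((hζ.pow_eq_one_iff_dvd _).mp hζi)

end ConjugateReciprocal

theorem stmt9 {q n₁ n₂ : ℕ} (hq : IsPrimePow q)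
    {F : Type*} [Field F] [Fintype F] (hF : Fintype.card F = q ^ 2)
    (hn₁ : Odd n₁) (hn₂ : Odd n₂)
    (h1q : Nat.Coprime n₁ q) (h2q : Nat.Coprime n₂ q)
    (hall₁ : ∀ f : F[X], f.Monic → Irreducible f → f ∣ X ^ n₁ - 1 → IsSCRIM q f)
    (hall₂ : ∀ f : F[X], f.Monic → Irreducible f → f ∣ X ^ n₂ - 1 → IsSCRIM q f) :
    ∀ f : F[X], f.Monic → Irreducible f → f ∣ X ^ (n₁ * n₂) - 1 → IsSCRIM q f := by
  obtain ⟨p, s, hp, -, rfl⟩ := hq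
  have := Fact.mk (Nat.prime_iff.mpr hp)
  have : CharP F p := charP_of_card_eq_prime_pow (hF.trans (pow_mul p s 2).symm)
  obtain ⟨j₁, hj₁, hd₁⟩ := exists_odd_dvd_pow_add_one_of_forall_eq_cdagger hF h1q
    fun f hm hirr hf => (hall₁ f hm hirr hf).2.2
  obtain ⟨j₂, hj₂, hd₂⟩ := exists_odd_dvd_pow_add_one_of_forall_eq_cdagger hF h2q
    fun f hm hirr hf => (hall₂ f hm hirr hf).2.2
  intro f hm hirr hf
  exact ⟨hm, hirr, eq_cdagger_of_dvd_X_pow_sub_one hF (hn₁.mul hn₂).pos.ne'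
    ((hj₁.mul hj₂).mul hn₂) (Nat.mul_dvd_pow_add_one hj₁ hj₂ hn₂ hd₁ hd₂) hm hirr hf⟩
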